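/- Let (Ω, μ) be a probability space, H > 0, α > 1, T ∈ ℝ, and let Y : ℝ → L²(μ) be wide-sense periodically correlated (PC) with period T, i.e. for all t, u ∈ ℝ: ∫ Y(t+T) dμ = ∫ Y(t) dμ and ∫ Y(t+T)·Y(u+T) dμ = ∫ Y(t)·Y(u) dμ. Define the quasi Lamperti transform X(t) := t^H · Y(log_α t) for t > 0, and set λ := α^T. Then X is wide-sense discrete scale invariant (DSI) with index H and scale λ, i.e. for all t, u > 0: ∫ X(λt) dμ = λ^H ∫ X(t) dμ and ∫ X(λt)·X(λu) dμ = λ^{2H} ∫ X(t)·X(u) dμ. -/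
import Mathlib


open MeasureTheory Real

lemma integral_smul_coe {Ω : Type*} [MeasurableSpace Ω] (μ : Measure Ω)
    (c : ℝ) (f : Lp ℝ 2 μ) : ∫ ω, (c • f) ω ∂μ = c * ∫ ω, f ω ∂μ := by
  rw [integral_congr_ae (Lp.coeFn_smul c f)]
  exact integral_const_mul c _

lemma integral_smul_mul_coe {Ω : Type*} [MeasurableSpace Ω] (μ : Measure Ω)
    (c d : ℝ) (f g : Lp ℝ 2 μ) :
    ∫ ω, (c • f) ω * (d • g) ω ∂μ = c * d * ∫ ω, f ω * g ω ∂μ := by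
  have h : (fun ω => (c • f) ω * (d • g) ω) =ᵐ[μ] fun ω => (c * d) * (f ω * g ω) := by
    filter_upwards [Lp.coeFn_smul c f, Lp.coeFn_smul d g] with ω h1 h2
    simp [h1, h2]; ring
  rw [integral_congr_ae h, integral_const_mul]

/-- Converse direction of Proposition 2.4: the quasi Lamperti transform of a
wide-sense PC process with period `T` is wide-sense DSI with index `H` and
scale `lam = α ^ T`. -/
theorem quasi_lamperti_of_PC_is_DSI
    {Ω : Type*} [MeasurableSpace Ω] (μ : Measure Ω) [IsProbabilityMeasure μ]
    (H α T : ℝ) (hH : 0 < H) (hα : 1 < α)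
    (Y : ℝ → Lp ℝ 2 μ)
    (hYmean : ∀ t : ℝ, ∫ ω, Y (t + T) ω ∂μ = ∫ ω, Y t ω ∂μ)
    (hYcov : ∀ t u : ℝ,
      ∫ ω, Y (t + T) ω * Y (u + T) ω ∂μ = ∫ ω, Y t ω * Y u ω ∂μ)
    (X : ℝ → Lp ℝ 2 μ)
    (hX : ∀ t : ℝ, 0 < t → X t = t ^ H • Y (Real.logb α t))
    (lam : ℝ) (hlam : lam = α ^ T) :
    (∀ t : ℝ, 0 < t →
      ∫ ω, X (lam * t) ω ∂μ = lam ^ H * ∫ ω, X t ω ∂μ) ∧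
    (∀ t u : ℝ, 0 < t → 0 < u →
      ∫ ω, X (lam * t) ω * X (lam * u) ω ∂μ
        = lam ^ (2 * H) * ∫ ω, X t ω * X u ω ∂μ) := by
  have hαpos : (0:ℝ) < α := lt_trans one_pos hα
  have hαne : α ≠ 1 := ne_of_gt hα
  have hlampos : 0 < lam := hlam ▸ rpow_pos_of_pos hαpos T
  have hlog : ∀ t : ℝ, 0 < t → Real.logb α (lam * t) = Real.logb α t + T := by
    intro t ht
    rw [Real.logb_mul (ne_of_gt hlampos) (ne_of_gt ht), hlam,
      Real.logb_rpow hαpos hαne]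
    ring
  have hpow : ∀ t : ℝ, 0 < t → (lam * t) ^ H = lam ^ H * t ^ H := fun t ht =>
    Real.mul_rpow hlampos.le ht.le
  constructor
  · intro t ht
    have hlt : 0 < lam * t := mul_pos hlampos ht
    rw [hX _ hlt, hX _ ht, hlog t ht, integral_smul_coe, integral_smul_coe,
      hYmean, hpow t ht, mul_assoc]
  · intro t u ht hu
    have hlt : 0 < lam * t := mul_pos hlampos ht
    have hlu : 0 < lam * u := mul_pos hlampos hu
    rw [hX _ hlt, hX _ hlu, hX _ ht, hX _ hu, hlog t ht, hlog u hu,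
      integral_smul_mul_coe, integral_smul_mul_coe, hYcov,
      hpow t ht, hpow u hu]
    rw [show (2:ℝ) * H = H + H by ring, Real.rpow_add hlampos]
    ring
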